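/- arXiv:2009.12026 — 2 statements merged into one kernel-verified Lean document; each statement's English description precedes it below -/
import Mathlib

section
/- Nulling gain identity: with G = 1 + N_S·κ_B/(1 + N_S(1 - κ_B)) and the covariance matrix entries E, S, C given by the OPA output formulas with κ_S = κ_B, κ_I = 1, N_B = 0, one obtains E = 1 and C = 0 and S = 1 + 2(1-κ_B)N_S; i.e., E = 1 + 2κ_B N_S - 4√(κ_B N_S(1+N_S))·√(N'(1+N')) + 2N'(1 + N_S + κ_B N_S) = 1 when N' = N_S κ_B/(1+N_S(1-κ_B)). -/
/-- Nulling gain identity: with gain `G = 1 + N'`, `N' = N_S κ_B/(1 + N_S(1-κ_B))`,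
the OPA output covariance entries (for `κ_S = κ_B`, `κ_I = 1`, `N_B = 0`) satisfy
`E = 1`, `C = 0`, and `S = 1 + 2(1-κ_B) N_S`: the signal mode is nulled to vacuum. -/
theorem stmt_14 (N_S κ_B N' Cp E S C : ℝ)
    (hNS : 0 ≤ N_S) (hκ0 : 0 ≤ κ_B) (hκ1 : κ_B ≤ 1)
    (hN' : N' = N_S * κ_B / (1 + N_S * (1 - κ_B)))
    (hCp : Cp = Real.sqrt (κ_B * N_S * (1 + N_S)))
    (hE : E = 1 + 2 * κ_B * N_S - 4 * Cp * Real.sqrt (N' * (1 + N'))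
        + 2 * N' * (1 + N_S + κ_B * N_S))
    (hS : S = 1 + 2 * N_S - 4 * Cp * Real.sqrt (N' * (1 + N'))
        + 2 * N' * (1 + N_S + κ_B * N_S))
    (hC : C = 2 * Real.sqrt (N' * (1 + N')) * (1 + N_S + κ_B * N_S)
        - 2 * (1 + 2 * N') * Cp) :
    E = 1 ∧ C = 0 ∧ S = 1 + 2 * (1 - κ_B) * N_S := by
  have hD : 0 < 1 + N_S * (1 - κ_B) := by nlinarith
  have hCp0 : 0 ≤ Cp := hCp ▸ Real.sqrt_nonneg _
  have hCpsq : Cp ^ 2 = κ_B * N_S * (1 + N_S) := by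
    rw [hCp, Real.sq_sqrt (by positivity)]
  have hs : Real.sqrt (N' * (1 + N')) = Cp / (1 + N_S * (1 - κ_B)) := by
    rw [show N' * (1 + N') = (Cp / (1 + N_S * (1 - κ_B))) ^ 2 from by
      rw [hN']; field_simp; nlinarith [hCpsq],
      Real.sqrt_sq (div_nonneg hCp0 hD.le)]
  refine ⟨?_, ?_, ?_⟩
  · rw [hE, hs, hN']; field_simp; nlinarith [hCpsq]
  · rw [hC, hs, hN']; field_simp; nlinarith [hCpsq]
  · rw [hS, hs, hN']; field_simp; nlinarith [hCpsq]
end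

section
/- Quantum advantage ratio for absorption detection: with κ_B = 1, κ_I = 1, N_B = 0, N_S > 0, 0 ≤ κ_T < 1, the ratio of the EA error probability P_E = (1/2)(1+N_S(1-√κ_T))^{-2M} to the classical exponential benchmark P_C = (1/4)e^{-MN_S(1-√κ_T)²} tends to 0 as M → ∞. -/
/-!
With `x = N_S (1 - √κ_T)` and `c = N_S (1 - √κ_T)² = x (1 - √κ_T) ≤ x`, the ratio equals
`2 (e^c / (1 + x)²)^M`, so it suffices that `e^x < (1 + x)²`. For `0 < x ≤ 1` this follows from
`e^{x/2} < 1 / (1 - x/2) ≤ 1 + x`.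
-/

open Filter Topology Real

lemma exp_half_lt_one_add {x : ℝ} (hx0 : 0 < x) (hx1 : x ≤ 1) : exp (x / 2) < 1 + x :=
  calc exp (x / 2) < 1 / (1 - x / 2) :=
        exp_bound_div_one_sub_of_interval' (by positivity) (by linarith)
    _ ≤ 1 + x := by rw [div_le_iff₀ (by linarith)]; nlinarith

lemma exp_lt_one_add_sq {x : ℝ} (hx0 : 0 < x) (hx1 : x ≤ 1) : exp x < (1 + x) ^ 2 :=
  calc exp x = exp (x / 2) ^ 2 := by rw [← exp_nat_mul]; ring_nf
    _ < (1 + x) ^ 2 := by gcongr; exact exp_half_lt_one_add hx0 hx1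

lemma tendsto_mul_pow_div_mul_exp_neg {a b c d : ℝ} (h : b ^ 2 * exp c < 1) :
    Tendsto (fun M : ℕ => a * b ^ (2 * M) / (d * exp (-(M * c)))) atTop (𝓝 0) := by
  have hq : Tendsto (fun M : ℕ => a / d * (b ^ 2 * exp c) ^ M) atTop (𝓝 0) := by
    simpa using (tendsto_pow_atTop_nhds_zero_of_lt_one (by positivity) h).const_mul (a / d)
  refine hq.congr fun M => ?_
  rw [exp_neg, exp_nat_mul, pow_mul, mul_pow, div_mul_eq_div_div, div_inv_eq_mul]
  ring

open Filter in
theorem stmt_19_general (N_S κ_T : ℝ) (hNS : 0 < N_S) (hκ1 : κ_T < 1)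
    (hx : N_S * (1 - Real.sqrt κ_T) ≤ 1) :
    Tendsto (fun M : ℕ =>
        ((1/2) * (1 / (1 + N_S * (1 - Real.sqrt κ_T))) ^ (2 * M)) /
          ((1/4) * Real.exp (-(M * N_S * (1 - Real.sqrt κ_T) ^ 2))))
      atTop (nhds 0) := by
  set x := N_S * (1 - √κ_T)
  have hs1 : √κ_T < 1 := (sqrt_lt' one_pos).mpr (by simpa using hκ1)
  have hx0 : 0 < x := mul_pos hNS (by linarith)
  have hcx : N_S * (1 - √κ_T) ^ 2 ≤ x := by
    calc N_S * (1 - √κ_T) ^ 2 = x * (1 - √κ_T) := by ring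
      _ ≤ x := mul_le_of_le_one_right hx0.le (by linarith [sqrt_nonneg κ_T])
  have hratio : (1 / (1 + x)) ^ 2 * exp (N_S * (1 - √κ_T) ^ 2) < 1 := by
    rw [div_pow, one_pow, one_div_mul_eq_div, div_lt_one (by positivity)]
    exact (exp_le_exp.mpr hcx).trans_lt (exp_lt_one_add_sq hx0 hx)
  simpa only [mul_assoc] using
    tendsto_mul_pow_div_mul_exp_neg (a := 1 / 2) (d := 1 / 4) hratio

open Filter in
/-- Quantum advantage in absorption detection: for `κ_B = κ_I = 1`, `N_B = 0`, the ratio of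
the EA error probability `(1/2)(1+N_S(1-√κ_T))^{-2M}` to the classical exponential benchmark
`(1/4) e^{-M N_S (1-√κ_T)²}` tends to `0` as `M → ∞` (assuming `N_S(1-√κ_T) ≤ 1`). -/
theorem stmt_19 (N_S κ_T : ℝ) (hNS : 0 < N_S) (hκ0 : 0 ≤ κ_T) (hκ1 : κ_T < 1)
    (hx : N_S * (1 - Real.sqrt κ_T) ≤ 1) :
    Tendsto (fun M : ℕ =>
        ((1/2) * (1 / (1 + N_S * (1 - Real.sqrt κ_T))) ^ (2 * M)) /
          ((1/4) * Real.exp (-(M * N_S * (1 - Real.sqrt κ_T) ^ 2))))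
      atTop (nhds 0) :=
  stmt_19_general N_S κ_T hNS hκ1 hx
end
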